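/- Let A' ⊆ E ∪ {a, γ} and A = A' \ {a, γ}, and suppose A is a flat of M (i.e., cl(A) = A). Then A' is a flat of M_X^e (i.e., cl'(A') = A') provided one of the following conditions holds: (1) A' = A, A ∪ {e} contains no OX-circuit of M, and F(A) = ∅; (2) A' = A and cl(A) contains no OX-circuit of M; (3) A' = A ∪ {a} and e ∉ cl(A); (4) A' = A ∪ {γ}, e ∉ cl(A), cl(A) contains an OX-circuit of M but A contains no OX-circuit of M, F(A) = ∅, and T(A) = ∅; (5) A' = A ∪ {γ}, cl(A) contains no OX-circuit of M, e ∉ cl(A), and T(A) = ∅; (6) A' = A ∪ {a, γ} and e ∈ A. -/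

import Mathlib

open Set

namespace ESSplit

variable {α : Type*}

/-- A circuit of a matroid: a minimal dependent set. -/
def IsCircuit (M : Matroid α) (C : Set α) : Prop :=
  M.Dep C ∧ ∀ D, D ⊂ C → M.Indep D

/-- A binary matroid: one representable over GF(2). -/
def IsBinary (M : Matroid α) : Prop :=
  ∃ (n : ℕ) (φ : α → (Fin n → ZMod 2)),
    ∀ I, I ⊆ M.E → (M.Indep I ↔ LinearIndependent (ZMod 2) (fun x : I => φ x.1))

/-- An OX-circuit: a circuit meeting `X` in an odd number of elements. -/
def IsOX (M : Matroid α) (X C : Set α) : Prop :=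
  IsCircuit M C ∧ Odd (C ∩ X).ncard

/-- An EX-circuit: a circuit meeting `X` in an even number of elements. -/
def IsEX (M : Matroid α) (X C : Set α) : Prop :=
  IsCircuit M C ∧ Even (C ∩ X).ncard

/-- `D` is a union of two disjoint OX-circuits containing no EX-circuit. -/
def OXUnion (M : Matroid α) (X D : Set α) : Prop :=
  ∃ C₁ C₂, IsOX M X C₁ ∧ IsOX M X C₂ ∧ Disjoint C₁ C₂ ∧ D = C₁ ∪ C₂ ∧
    ¬ ∃ C₀, IsEX M X C₀ ∧ C₀ ⊆ D

/-- The description of the circuits of the es-splitting matroid `M_X^e`. -/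
def ESCircuit (M : Matroid α) (X : Set α) (e a γ : α) (C : Set α) : Prop :=
  C = {e, a, γ} ∨
  IsEX M X C ∨
  (OXUnion M X C ∧ ∀ D, OXUnion M X D → D ⊆ C → D = C) ∨
  (∃ C₀, IsOX M X C₀ ∧ C = C₀ ∪ {a}) ∨
  (∃ C₀, IsOX M X C₀ ∧ e ∉ C₀ ∧ C = C₀ ∪ {e, γ}) ∨
  (∃ C₀, IsOX M X C₀ ∧ e ∈ C₀ ∧ C = (C₀ \ {e}) ∪ {γ}) ∨
  (∃ C₀, IsCircuit M C₀ ∧ e ∈ C₀ ∧ Odd (((C₀ \ {e}) ∩ X).ncard) ∧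
      C = (C₀ \ {e}) ∪ {a, γ})

/-- `M'` is the es-splitting matroid `M_X^e` of `M` (with new elements `a`, `γ`):
it has ground set `M.E ∪ {a, γ}` and its circuits are exactly as described. -/
def IsESSplit (M M' : Matroid α) (X : Set α) (e a γ : α) : Prop :=
  M'.E = M.E ∪ {a, γ} ∧ ∀ C, IsCircuit M' C ↔ ESCircuit M X e a γ C

/-- The set `T(A)`. -/
def T (M : Matroid α) (X : Set α) (e : α) (A : Set α) : Set α :=
  {x | x ∈ M.E \ A ∧ x ≠ e ∧ ∃ C, IsOX M X C ∧ x ∈ C ∧ e ∈ C ∧ C ⊆ A ∪ {e, x}}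

/-- The set `F(A)`. -/
def F (M : Matroid α) (X A : Set α) : Set α :=
  {x | x ∈ M.closure A \ A ∧ ∃ C, IsOX M X C ∧ x ∈ C ∧ C ⊆ M.closure A}

/-- The rank of a set `A` in a (finite) matroid: the maximum size of an
independent subset of `A`. -/
noncomputable def rk (M : Matroid α) (A : Set α) : ℕ :=
  sSup {n | ∃ I, M.Indep I ∧ I ⊆ A ∧ I.ncard = n}

end ESSplit

open ESSplit

/-! A set is closed in a matroid exactly when no circuit meets its complement in a single element.
So one runs through the seven kinds of circuits of `M_X^e` and checks that none of them has exactly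
one element `x` outside `A'`. The part of such a circuit inside `E` is made of circuits of `M`
(possibly minus `e`), which the flat `A` of `M` absorbs; what is left depends only on which of `a`, `γ`
lie in `A'`, and the six cases supply exactly what is needed: with neither, `A` contains no
OX-circuit; with exactly one, `e ∉ A` (with `γ` alone, also no OX-circuit in `A` and `T(A) = ∅`);
with both, `e ∈ A`. -/

namespace Matroid

variable {α : Type*} {M : Matroid α} {F C : Set α} {x : α}

lemma IsFlat.isCircuit_subset_of_sdiff_singleton_subset (hF : M.IsFlat F) (hC : M.IsCircuit C)
    (hCF : C \ {x} ⊆ F) : C ⊆ F :=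
  (hC.subset_closure_sdiff_singleton x).trans
    ((M.closure_subset_closure hCF).trans hF.closure.subset)

lemma closure_eq_self_of_forall_isCircuit (hF : F ⊆ M.E)
    (h : ∀ C x, M.IsCircuit C → x ∈ C → C ⊆ insert x F → x ∈ F) : M.closure F = F := by
  refine (M.subset_closure F hF).antisymm' fun x hx => ?_
  by_contra hxF
  obtain ⟨C, hCx, hC, hxC⟩ := exists_isCircuit_of_mem_closure hx hxF
  exact hxF (h C x hC hxC hCx)

end Matroid

namespace ESSplit

variable {α : Type*} {M M' : Matroid α} {X C S : Set α} {e a γ x y : α} {A' A : Set α}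

lemma isCircuit_iff_isCircuit : IsCircuit M C ↔ M.IsCircuit C := by
  rw [Matroid.isCircuit_iff_forall_ssubset]
  rfl

/-- The last four fields are the six cases of the theorem, sorted by which of `a`, `γ` lie in `A'`. -/
structure FlatConditions (M : Matroid α) (X : Set α) (e a γ : α) (A' A : Set α) : Prop where
  e_mem_ground : e ∈ M.E
  a_notMem_ground : a ∉ M.E
  γ_notMem_ground : γ ∉ M.E
  a_ne_γ : a ≠ γ
  eq_diff : A = A' \ {a, γ}
  isFlat : M.IsFlat A
  a_mem_of_isOX_subset : ∀ C, IsOX M X C → C ⊆ A → a ∈ A'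
  e_notMem_of_xor : Xor (a ∈ A') (γ ∈ A') → e ∉ A
  T_eq_empty : γ ∈ A' → a ∉ A' → T M X e A = ∅
  e_mem_of_mem : a ∈ A' → γ ∈ A' → e ∈ A

namespace FlatConditions

lemma subset (h : FlatConditions M X e a γ A' A) : A ⊆ A' :=
  h.eq_diff ▸ sdiff_subset

lemma mem_of_mem_ground (h : FlatConditions M X e a γ A' A) (hy : y ∈ A') (hyE : y ∈ M.E) :
    y ∈ A := by
  rw [h.eq_diff]
  refine ⟨hy, ?_⟩
  rintro (rfl | rfl)
  exacts [h.a_notMem_ground hyE, h.γ_notMem_ground hyE]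

lemma subset_insert_of_subset_ground (h : FlatConditions M X e a γ A' A) (hS : S ⊆ M.E)
    (hSx : S ⊆ insert x A') : S ⊆ insert x A :=
  fun _ hy => (hSx hy).imp_right fun hyA' => h.mem_of_mem_ground hyA' (hS hy)

lemma subset_of_subset_insert (h : FlatConditions M X e a γ A' A) (hS : S ⊆ M.E) (hxS : x ∉ S)
    (hSx : S ⊆ insert x A') : S ⊆ A :=
  (subset_insert_iff_of_notMem hxS).1 (h.subset_insert_of_subset_ground hS hSx)

lemma mem_of_isCircuit (h : FlatConditions M X e a γ A' A) (hC : IsCircuit M C) (hxC : x ∈ C)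
    (hCx : C ⊆ insert x A') : x ∈ A' :=
  h.subset <| h.isFlat.isCircuit_subset_of_sdiff_singleton_subset (isCircuit_iff_isCircuit.1 hC)
    (sdiff_singleton_subset_iff.2 (h.subset_insert_of_subset_ground hC.1.subset_ground hCx)) hxC

lemma mem_of_isCircuit_of_e_mem (h : FlatConditions M X e a γ A' A) (hC : IsCircuit M C)
    (hxC : x ∈ C) (heA : e ∈ A) (hCx : C \ {e} ⊆ insert x A') : x ∈ A' :=
  h.mem_of_isCircuit hC hxC ((sdiff_singleton_subset_iff.1 hCx).trans
    (insert_subset (mem_insert_of_mem x (h.subset heA)) subset_rfl))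

lemma subset_of_sdiff_subset_insert (h : FlatConditions M X e a γ A' A) (hC : IsCircuit M C)
    (hxC : x ∉ C) (hCx : C \ {e} ⊆ insert x A') : C ⊆ A :=
  h.isFlat.isCircuit_subset_of_sdiff_singleton_subset (isCircuit_iff_isCircuit.1 hC)
    (h.subset_of_subset_insert (sdiff_subset.trans hC.1.subset_ground) (fun hx => hxC hx.1) hCx)

lemma γ_mem_of_isOX_subset (h : FlatConditions M X e a γ A' A) (hC : IsOX M X C) (hCA : C ⊆ A)
    (heA : e ∈ A) : γ ∈ A' := by
  by_contra hγ
  exact h.e_notMem_of_xor (Or.inl ⟨h.a_mem_of_isOX_subset C hC hCA, hγ⟩) heA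

lemma mem_of_triangle (h : FlatConditions M X e a γ A' A) (hx : x ∈ ({e, a, γ} : Set α))
    (hsub : {e, a, γ} ⊆ insert x A') : x ∈ A' := by
  by_contra hxA'
  have hout : ∀ y ∈ ({e, a, γ} : Set α), y ∉ A' → y = x :=
    fun y hy hyA' => (hsub hy).resolve_right hyA'
  have heA (hex : e ≠ x) : e ∈ A :=
    h.mem_of_mem_ground ((hsub (mem_insert e _)).resolve_left hex) h.e_mem_ground
  by_cases ha : a ∈ A' <;> by_cases hγ : γ ∈ A'
  · exact hxA' (insert_subset (h.subset (h.e_mem_of_mem ha hγ)) (pair_subset ha hγ) hx)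
  · obtain rfl := hout γ (by simp) hγ
    exact h.e_notMem_of_xor (Or.inl ⟨ha, hγ⟩)
      (heA (ne_of_mem_of_not_mem h.e_mem_ground h.γ_notMem_ground))
  · obtain rfl := hout a (by simp) ha
    exact h.e_notMem_of_xor (Or.inr ⟨hγ, ha⟩)
      (heA (ne_of_mem_of_not_mem h.e_mem_ground h.a_notMem_ground))
  · exact h.a_ne_γ ((hout a (by simp) ha).trans (hout γ (by simp) hγ).symm)

lemma mem_of_isOX_union_a (h : FlatConditions M X e a γ A' A) (hC : IsOX M X C)
    (hx : x ∈ C ∪ {a}) (hsub : C ∪ {a} ⊆ insert x A') : x ∈ A' := by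
  have hCE := hC.1.1.subset_ground
  obtain hxC | rfl := hx
  · exact h.mem_of_isCircuit hC.1 hxC (subset_union_left.trans hsub)
  · exact h.a_mem_of_isOX_subset C hC (h.subset_of_subset_insert hCE
      (notMem_subset hCE h.a_notMem_ground) (subset_union_left.trans hsub))

lemma mem_of_isOX_union_e_γ (h : FlatConditions M X e a γ A' A) (hC : IsOX M X C) (heC : e ∉ C)
    (hx : x ∈ C ∪ {e, γ}) (hsub : C ∪ {e, γ} ⊆ insert x A') : x ∈ A' := by
  have hCE := hC.1.1.subset_ground
  have heγ : e ≠ γ := ne_of_mem_of_not_mem h.e_mem_ground h.γ_notMem_ground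
  obtain hxC | rfl | rfl := hx
  · exact h.mem_of_isCircuit hC.1 hxC (subset_union_left.trans hsub)
  · have hγ : γ ∈ A' := (hsub (by simp)).resolve_left heγ.symm
    have hCA := h.subset_of_subset_insert hCE heC (subset_union_left.trans hsub)
    exact h.subset (h.e_mem_of_mem (h.a_mem_of_isOX_subset C hC hCA) hγ)
  · have heA : e ∈ A := h.mem_of_mem_ground ((hsub (by simp)).resolve_left heγ) h.e_mem_ground
    exact h.γ_mem_of_isOX_subset hC (h.subset_of_subset_insert hCE
      (notMem_subset hCE h.γ_notMem_ground) (subset_union_left.trans hsub)) heA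

lemma mem_of_isOX_sdiff_union_γ (h : FlatConditions M X e a γ A' A) (hC : IsOX M X C)
    (heC : e ∈ C) (hx : x ∈ C \ {e} ∪ {γ}) (hsub : C \ {e} ∪ {γ} ⊆ insert x A') : x ∈ A' := by
  have hCE := hC.1.1.subset_ground
  have hCx := subset_union_left.trans hsub
  obtain hxC | rfl := hx
  · by_contra hxA'
    have hγ : γ ∈ A' :=
      (hsub (by simp)).resolve_left (ne_of_mem_of_not_mem (hCE hxC.1) h.γ_notMem_ground).symm
    by_cases ha : a ∈ A'
    · exact hxA' (h.mem_of_isCircuit_of_e_mem hC.1 hxC.1 (h.e_mem_of_mem ha hγ) hCx)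
    · have hxT : x ∈ T M X e A := by
        refine ⟨⟨hCE hxC.1, fun hxA => hxA' (h.subset hxA)⟩, hxC.2, C, hC, hxC.1, heC, ?_⟩
        have hCeA := sdiff_singleton_subset_iff.1
          (h.subset_insert_of_subset_ground (sdiff_subset.trans hCE) hCx)
        intro y hy
        rcases hCeA hy with rfl | rfl | hyA
        exacts [Or.inr (mem_insert _ _), Or.inr (mem_insert_of_mem _ rfl), Or.inl hyA]
      simp [h.T_eq_empty hγ ha] at hxT
  · have hCA := h.subset_of_sdiff_subset_insert hC.1 (notMem_subset hCE h.γ_notMem_ground) hCx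
    exact h.γ_mem_of_isOX_subset hC hCA (hCA heC)

lemma mem_of_isCircuit_sdiff_union_a_γ (h : FlatConditions M X e a γ A' A) (hC : IsCircuit M C)
    (heC : e ∈ C) (hx : x ∈ C \ {e} ∪ {a, γ}) (hsub : C \ {e} ∪ {a, γ} ⊆ insert x A') :
    x ∈ A' := by
  have hCE := hC.1.subset_ground
  have hCx := subset_union_left.trans hsub
  by_contra hxA'
  obtain hxC | rfl | rfl := hx
  · have hxE := hCE hxC.1
    have ha : a ∈ A' :=
      (hsub (by simp)).resolve_left (ne_of_mem_of_not_mem hxE h.a_notMem_ground).symm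
    have hγ : γ ∈ A' :=
      (hsub (by simp)).resolve_left (ne_of_mem_of_not_mem hxE h.γ_notMem_ground).symm
    exact hxA' (h.mem_of_isCircuit_of_e_mem hC hxC.1 (h.e_mem_of_mem ha hγ) hCx)
  · have hγ : γ ∈ A' := (hsub (by simp)).resolve_left h.a_ne_γ.symm
    exact h.e_notMem_of_xor (Or.inr ⟨hγ, hxA'⟩) (h.subset_of_sdiff_subset_insert hC
      (notMem_subset hCE h.a_notMem_ground) hCx heC)
  · have ha : a ∈ A' := (hsub (by simp)).resolve_left h.a_ne_γ
    exact h.e_notMem_of_xor (Or.inl ⟨ha, hxA'⟩) (h.subset_of_sdiff_subset_insert hC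
      (notMem_subset hCE h.γ_notMem_ground) hCx heC)

lemma of_cases (he : e ∈ M.E) (ha : a ∉ M.E) (hγ : γ ∉ M.E) (haγ : a ≠ γ)
    (hA : A = A' \ {a, γ}) (hflat : M.IsFlat A)
    (hcase : (A' = A ∧ ¬ ∃ C, IsOX M X C ∧ C ⊆ A) ∨ (A' = A ∪ {a} ∧ e ∉ A) ∨
      (A' = A ∪ {γ} ∧ e ∉ A ∧ (¬ ∃ C, IsOX M X C ∧ C ⊆ A) ∧ T M X e A = ∅) ∨
      (A' = A ∪ {a, γ} ∧ e ∈ A)) :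
    FlatConditions M X e a γ A' A := by
  have haA : a ∉ A := notMem_subset hflat.subset_ground ha
  have hγA : γ ∉ A := notMem_subset hflat.subset_ground hγ
  refine ⟨he, ha, hγ, haγ, hA, hflat, ?_, ?_, ?_, ?_⟩ <;> clear hA <;>
    obtain ⟨rfl, hno⟩ | ⟨rfl, he⟩ | ⟨rfl, he, hno, hT⟩ | ⟨rfl, heA⟩ := hcase <;>
    simp_all [Xor, haγ.symm]

theorem closure_eq (h : FlatConditions M X e a γ A' A) (hsplit : IsESSplit M M' X e a γ)
    (hA' : A' ⊆ M.E ∪ {a, γ}) : M'.closure A' = A' := by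
  obtain ⟨hE', hcirc⟩ := hsplit
  refine Matroid.closure_eq_self_of_forall_isCircuit (hE' ▸ hA') fun C x hC hxC hCx => ?_
  obtain rfl | hEX | ⟨⟨C₁, C₂, hC₁, hC₂, -, rfl, -⟩, -⟩ | ⟨C₀, hC₀, rfl⟩ | ⟨C₀, hC₀, heC₀, rfl⟩ |
      ⟨C₀, hC₀, heC₀, rfl⟩ | ⟨C₀, hC₀, heC₀, -, rfl⟩ := (hcirc C).1 (isCircuit_iff_isCircuit.2 hC)
  · exact h.mem_of_triangle hxC hCx
  · exact h.mem_of_isCircuit hEX.1 hxC hCx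
  · obtain hx | hx := hxC
    · exact h.mem_of_isCircuit hC₁.1 hx (subset_union_left.trans hCx)
    · exact h.mem_of_isCircuit hC₂.1 hx (subset_union_right.trans hCx)
  · exact h.mem_of_isOX_union_a hC₀ hxC hCx
  · exact h.mem_of_isOX_union_e_γ hC₀ heC₀ hxC hCx
  · exact h.mem_of_isOX_sdiff_union_γ hC₀ heC₀ hxC hCx
  · exact h.mem_of_isCircuit_sdiff_union_a_γ hC₀ heC₀ hxC hCx

end FlatConditions

end ESSplit

theorem flats_es_splitting_general
    {α : Type*} (M M' : Matroid α) (X : Set α) (e a γ : α)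
    (hXE : X ⊆ M.E) (heX : e ∈ X) (haE : a ∉ M.E) (hγE : γ ∉ M.E) (haγ : a ≠ γ)
    (hsplit : IsESSplit M M' X e a γ)
    (A' A : Set α) (hA'sub : A' ⊆ M.E ∪ {a, γ}) (hA : A = A' \ {a, γ})
    (hflat : M.closure A = A)
    (hcase :
      (A' = A ∧ (¬ ∃ C, IsOX M X C ∧ C ⊆ A ∪ {e}) ∧ F M X A = ∅) ∨
      (A' = A ∧ ¬ ∃ C, IsOX M X C ∧ C ⊆ M.closure A) ∨
      (A' = A ∪ {a} ∧ e ∉ M.closure A) ∨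
      (A' = A ∪ {γ} ∧ e ∉ M.closure A ∧ (∃ C, IsOX M X C ∧ C ⊆ M.closure A) ∧
        (¬ ∃ C, IsOX M X C ∧ C ⊆ A) ∧ F M X A = ∅ ∧ T M X e A = ∅) ∨
      (A' = A ∪ {γ} ∧ (¬ ∃ C, IsOX M X C ∧ C ⊆ M.closure A) ∧ e ∉ M.closure A ∧
        T M X e A = ∅) ∨
      (A' = A ∪ {a, γ} ∧ e ∈ A)) :
    M'.closure A' = A' := by
  rw [hflat] at hcase
  refine FlatConditions.closure_eq (FlatConditions.of_cases (hXE heX) haE hγE haγ hA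
    (Matroid.isFlat_iff_closure_eq.2 hflat) ?_) hsplit hA'sub
  obtain ⟨hA', hno, -⟩ | h | h | ⟨hA', he, -, hno, -, hT⟩ | ⟨hA', hno, he, hT⟩ | h := hcase
  · exact Or.inl ⟨hA', fun ⟨C, hC, hCA⟩ => hno ⟨C, hC, hCA.trans subset_union_left⟩⟩
  · exact Or.inl h
  · exact Or.inr (Or.inl h)
  · exact Or.inr (Or.inr (Or.inl ⟨hA', he, hno, hT⟩))
  · exact Or.inr (Or.inr (Or.inl ⟨hA', he, hno, hT⟩))
  · exact Or.inr (Or.inr (Or.inr h))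

theorem flats_es_splitting
    {α : Type*} (M M' : Matroid α) (X : Set α) (e a γ : α)
    (hfin : M.E.Finite) (hbin : IsBinary M)
    (hXE : X ⊆ M.E) (heX : e ∈ X) (haE : a ∉ M.E) (hγE : γ ∉ M.E) (haγ : a ≠ γ)
    (hsplit : IsESSplit M M' X e a γ)
    (A' A : Set α) (hA'sub : A' ⊆ M.E ∪ {a, γ}) (hA : A = A' \ {a, γ})
    (hflat : M.closure A = A)
    (hcase :
      (A' = A ∧ (¬ ∃ C, IsOX M X C ∧ C ⊆ A ∪ {e}) ∧ F M X A = ∅) ∨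
      (A' = A ∧ ¬ ∃ C, IsOX M X C ∧ C ⊆ M.closure A) ∨
      (A' = A ∪ {a} ∧ e ∉ M.closure A) ∨
      (A' = A ∪ {γ} ∧ e ∉ M.closure A ∧ (∃ C, IsOX M X C ∧ C ⊆ M.closure A) ∧
        (¬ ∃ C, IsOX M X C ∧ C ⊆ A) ∧ F M X A = ∅ ∧ T M X e A = ∅) ∨
      (A' = A ∪ {γ} ∧ (¬ ∃ C, IsOX M X C ∧ C ⊆ M.closure A) ∧ e ∉ M.closure A ∧
        T M X e A = ∅) ∨
      (A' = A ∪ {a, γ} ∧ e ∈ A)) :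
    M'.closure A' = A' :=
  flats_es_splitting_general M M' X e a γ hXE heX haE hγE haγ hsplit A' A hA'sub hA hflat hcase
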